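/- Markov chain tree theorem: Let P be an irreducible row-stochastic matrix on a finite set S and let π be a stationary distribution of P. Then the total arborescence weight Σ_{j∈S} |H_P(j)| is strictly positive and, for every i ∈ S, π(i) = |H_P(i)| / Σ_{j∈S} |H_P(j)|. -/

import Mathlib

open Filter Topology

/-- A matrix is row-stochastic: nonnegative entries and each row sums to 1. -/
def RowStochastic {S : Type*} [Fintype S] (P : Matrix S S ℝ) : Prop :=
  (∀ i j, 0 ≤ P i j) ∧ ∀ i, ∑ j, P i j = 1

/-- A probability row vector `π` is a stationary distribution of `P`. -/
def StationaryDist {S : Type*} [Fintype S] (P : Matrix S S ℝ) (π : S → ℝ) : Prop :=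
  (∀ i, 0 ≤ π i) ∧ (∑ i, π i = 1) ∧ ∀ j, ∑ i, π i * P i j = π j

/-- Irreducibility: any state leads to any other in some number `k ≥ 1` of steps. -/
def MatIrreducible {S : Type*} [Fintype S] [DecidableEq S] (P : Matrix S S ℝ) : Prop :=
  ∀ i j, ∃ k, 1 ≤ k ∧ 0 < (P ^ k) i j

/-- An arborescence rooted at `root`, encoded as a map `f : S → S` fixing the root
(so that the partial map on `S \ {root}` is pinned down) such that iterates of `f`
from every state reach the root. -/
def IsArb {S : Type*} (root : S) (f : S → S) : Prop :=
  f root = root ∧ ∀ j, ∃ k, f^[k] j = root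

/-- The weight of an arborescence with respect to a matrix `R`:
the product of the weights of its edges `(j, f j)`, `j ≠ root`. -/
def arbWeight {S : Type*} [Fintype S] [DecidableEq S]
    (R : Matrix S S ℝ) (root : S) (f : S → S) : ℝ :=
  ∏ j ∈ Finset.univ.erase root, R j (f j)

open Classical in
/-- `|H_R(root)|`: the total weight of all arborescences rooted at `root`. -/
noncomputable def arbSum {S : Type*} [Fintype S] [DecidableEq S]
    (R : Matrix S S ℝ) (root : S) : ℝ :=
  ∑ f ∈ Finset.univ.filter (fun f : S → S => IsArb root f), arbWeight R root f

/-!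
The vector `μ i := |H_P(i)|` is stationary. Both `∑ i, μ i * P i j` and
`μ j = μ j * ∑ m, P j m` expand into the total weight of the maps `g : S → S` whose functional
graph is connected with `j` on its cycle: such a `g` arises in exactly one way from an
arborescence rooted at `j` by adding an edge out of `j`, and in exactly one way from an
arborescence rooted at the cycle predecessor `i` of `j` by adding the edge `i → j`.
Irreducibility makes every `μ i` positive (a shortest-path tree has positive weight) and forces
every stationary vector to be a multiple of `μ` (minimal-ratio argument), and normalising gives
the formula for `π`.
-/

open Finset Function Matrix

section FunctionalGraph

variable {S : Type*}

theorem exists_iterate_update_eq [DecidableEq S] {f : S → S} {i x : S} (a : S)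
    (h : ∃ k, f^[k] x = i) : ∃ k, (update f i a)^[k] x = i := by
  obtain ⟨k, hk⟩ := h
  induction k generalizing x with
  | zero => exact ⟨0, hk⟩
  | succ k ih =>
    by_cases hx : x = i
    · exact ⟨0, hx⟩
    · rw [iterate_succ_apply] at hk
      obtain ⟨m, hm⟩ := ih hk
      exact ⟨m + 1, by rw [iterate_succ_apply, update_of_ne hx, hm]⟩

theorem exists_iterate_eq_of_lt {f : S → S} {r : S} (d : S → ℕ)
    (hd : ∀ x, x ≠ r → d (f x) < d x) (x : S) : ∃ k, f^[k] x = r := by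
  induction hn : d x using Nat.strong_induction_on generalizing x with
  | _ n ih =>
    by_cases hx : x = r
    · exact ⟨0, hx⟩
    · obtain ⟨k, hk⟩ := ih _ (hn ▸ hd x hx) (f x) rfl
      exact ⟨k + 1, by rwa [iterate_succ_apply]⟩

/-- Uniqueness of the cycle predecessor of `x`: if the orbit of `x` met `p` before `q`, then
`g p = x` would let it meet `q` even earlier. -/
theorem eq_of_apply_eq_of_exists_iterate_eq {g : S → S} {x p q : S} (hp : g p = x)
    (hq : g q = x) (hxp : ∃ a, g^[a] x = p) (hxq : ∃ b, g^[b] x = q) : p = q := by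
  classical
  wlog hle : Nat.find hxp ≤ Nat.find hxq generalizing p q
  · exact (this hq hp hxq hxp (le_of_not_ge hle)).symm
  obtain hlt | heq := hle.lt_or_eq
  · have hshort : g^[Nat.find hxq - (Nat.find hxp + 1)] x = q := by
      have key : g^[Nat.find hxq] x =
          g^[Nat.find hxq - (Nat.find hxp + 1)] (g^[Nat.find hxp + 1] x) := by
        rw [← iterate_add_apply, Nat.sub_add_cancel hlt]
      rwa [iterate_succ_apply', Nat.find_spec hxp, hp, Nat.find_spec hxq, eq_comm] at key
    have := Nat.find_min' hxq hshort
    omega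
  · calc p = g^[Nat.find hxp] x := (Nat.find_spec hxp).symm
      _ = g^[Nat.find hxq] x := by rw [heq]
      _ = q := Nat.find_spec hxq

/-- Every orbit of `g` passes through `j`; equivalently, the functional graph of `g` is connected
and its unique cycle contains `j`. -/
def IsUnicyclicThrough (g : S → S) (j : S) : Prop :=
  ∀ x, ∃ k, g^[k] x = j

theorem IsUnicyclicThrough.of_iterate {g : S → S} {j p : S} (hg : IsUnicyclicThrough g j)
    {k : ℕ} (hk : g^[k] j = p) : IsUnicyclicThrough g p := fun x => by
  obtain ⟨m, hm⟩ := hg x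
  exact ⟨k + m, by rw [iterate_add_apply, hm, hk]⟩

theorem IsUnicyclicThrough.exists_pred {g : S → S} {j : S} (hg : IsUnicyclicThrough g j) :
    ∃ p, g p = j ∧ ∃ k, g^[k] j = p := by
  obtain ⟨k, hk⟩ := hg (g j)
  exact ⟨g^[k] j, by rwa [← iterate_succ_apply' g k j, iterate_succ_apply], k, rfl⟩

theorem IsUnicyclicThrough.isArb_update_self [DecidableEq S] {g : S → S} {j : S}
    (hg : IsUnicyclicThrough g j) : IsArb j (update g j j) :=
  ⟨update_self _ _ _, fun x => exists_iterate_update_eq j (hg x)⟩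

theorem IsArb.isUnicyclicThrough_update [DecidableEq S] {f : S → S} {i : S} (hf : IsArb i f)
    (a : S) : IsUnicyclicThrough (update f i a) i :=
  fun x => exists_iterate_update_eq a (hf.2 x)

theorem IsArb.update_update_self [DecidableEq S] {f : S → S} {i : S} (hf : IsArb i f) (a : S) :
    update (update f i a) i i = f := by
  rw [update_idem, update_eq_self_iff, hf.1]

end FunctionalGraph

section TreeCounting

variable {S : Type*} [Fintype S] [DecidableEq S]

def mapWeight (R : Matrix S S ℝ) (g : S → S) : ℝ :=
  ∏ x, R x (g x)

open Classical in
noncomputable def unicyclicWeight (R : Matrix S S ℝ) (j : S) : ℝ :=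
  ∑ g ∈ univ.filter (fun g : S → S => IsUnicyclicThrough g j), mapWeight R g

theorem mapWeight_update (R : Matrix S S ℝ) (f : S → S) (i a : S) :
    mapWeight R (update f i a) = R i a * arbWeight R i f := by
  rw [mapWeight, ← mul_prod_erase univ _ (mem_univ i), update_self, arbWeight]
  congr 1
  exact prod_congr rfl fun x hx => by rw [update_of_ne (ne_of_mem_erase hx)]

theorem arbSum_mul_sum_row (R : Matrix S S ℝ) (j : S) :
    arbSum R j * ∑ m, R j m = unicyclicWeight R j := by
  simp_rw [arbSum, sum_mul, mul_sum]
  rw [← sum_product', unicyclicWeight]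
  refine sum_nbij' (fun p => update p.1 j p.2) (fun g => (update g j j, g j)) ?_ ?_ ?_ ?_ ?_
  · rintro ⟨f, m⟩ hf
    simp only [mem_product, mem_filter, mem_univ, true_and, and_true] at hf ⊢
    exact hf.isUnicyclicThrough_update m
  · intro g hg
    simp only [mem_product, mem_filter, mem_univ, true_and, and_true] at hg ⊢
    exact hg.isArb_update_self
  · rintro ⟨f, m⟩ hf
    simp only [mem_product, mem_filter, mem_univ, true_and, and_true] at hf
    simp only [hf.update_update_self, update_self]
  · intro g _
    simp only [update_idem, update_eq_self]
  · rintro ⟨f, m⟩ _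
    rw [mapWeight_update, mul_comm]

theorem sum_arbSum_mul (R : Matrix S S ℝ) (j : S) :
    ∑ i, arbSum R i * R i j = unicyclicWeight R j := by
  simp_rw [arbSum, sum_mul]
  rw [sum_sigma', unicyclicWeight]
  refine sum_nbij (fun p => update p.2 p.1 j) ?_ ?_ ?_ ?_
  · rintro ⟨i, f⟩ hf
    simp only [mem_sigma, mem_filter, mem_univ, true_and] at hf ⊢
    exact (hf.isUnicyclicThrough_update j).of_iterate (k := 1) (update_self _ _ _)
  · rintro ⟨i, f⟩ hf ⟨i', f'⟩ hf' hg
    simp only [coe_sigma, Set.mem_sigma_iff, mem_coe, mem_filter, mem_univ, true_and]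
      at hf hf' hg
    have hi : i = i' := eq_of_apply_eq_of_exists_iterate_eq (g := update f i j) (x := j)
      (update_self _ _ _) (by rw [hg, update_self]) (exists_iterate_update_eq j (hf.2 j))
      (by rw [hg]; exact exists_iterate_update_eq j (hf'.2 j))
    subst hi
    rw [← hf.update_update_self j, hg, hf'.update_update_self j]
  · intro g hg
    simp only [coe_filter, Set.mem_ofPred_eq, mem_univ, true_and] at hg
    obtain ⟨p, hgp, k, hk⟩ := hg.exists_pred
    refine ⟨⟨p, update g p p⟩, ?_, ?_⟩
    · simpa using (hg.of_iterate hk).isArb_update_self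
    · simp only [update_idem, update_eq_self_iff, hgp]
  · rintro ⟨i, f⟩ _
    rw [mapWeight_update, mul_comm]

theorem arbSum_vecMul {R : Matrix S S ℝ} (hR : ∀ i, ∑ j, R i j = 1) :
    arbSum R ᵥ* R = arbSum R := by
  ext j
  simpa [vecMul, dotProduct, hR] using
    (sum_arbSum_mul R j).trans (arbSum_mul_sum_row R j).symm

end TreeCounting

section Irreducible

variable {S : Type*} [Fintype S] [DecidableEq S] {P : Matrix S S ℝ}

theorem exists_pos_apply_of_pow_succ_apply_pos (hP : ∀ i j, 0 ≤ P i j) {k : ℕ} {x y : S}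
    (h : 0 < (P ^ (k + 1)) x y) : ∃ m, 0 < P x m ∧ 0 < (P ^ k) m y := by
  rw [pow_succ', mul_apply, sum_pos_iff_of_nonneg
    fun m _ => mul_nonneg (hP x m) (pow_apply_nonneg hP k m y)] at h
  obtain ⟨m, -, hm⟩ := h
  exact ⟨m, pos_of_mul_pos_left hm (pow_apply_nonneg hP k m y),
    pos_of_mul_pos_right hm (hP x m)⟩

/-- A shortest-path tree: each `x ≠ r` points to a neighbour strictly closer to `r`. -/
theorem exists_isArb_forall_pos (hP : ∀ i j, 0 ≤ P i j) (hirr : MatIrreducible P) (r : S) :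
    ∃ f, IsArb r f ∧ ∀ x, x ≠ r → 0 < P x (f x) := by
  classical
  have hreach : ∀ x, ∃ k, 0 < (P ^ k) x r := fun x => (hirr x r).imp fun _ hk => hk.2
  let dist : S → ℕ := fun x => Nat.find (hreach x)
  have hdist : ∀ x, 0 < (P ^ dist x) x r := fun x => Nat.find_spec (hreach x)
  have hdist_le : ∀ x k, 0 < (P ^ k) x r → dist x ≤ k := fun x _ => Nat.find_min' (hreach x)
  have hstep : ∀ x, x ≠ r → ∃ m, 0 < P x m ∧ dist m < dist x := by
    intro x hx
    obtain ⟨k, hk⟩ : ∃ k, dist x = k + 1 := by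
      refine Nat.exists_eq_succ_of_ne_zero fun h0 => ?_
      simpa [h0, one_apply_ne hx] using hdist x
    obtain ⟨m, hxm, hmr⟩ := exists_pos_apply_of_pow_succ_apply_pos hP (hk ▸ hdist x)
    exact ⟨m, hxm, (hdist_le m k hmr).trans_lt (by omega)⟩
  choose! next hnext using hstep
  have hf : ∀ x, x ≠ r → 0 < P x (update next r r x) ∧ dist (update next r r x) < dist x :=
    fun x hx => by simpa only [update_of_ne hx] using hnext x hx
  exact ⟨update next r r,
    ⟨update_self _ _ _, exists_iterate_eq_of_lt dist fun x hx => (hf x hx).2⟩,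
    fun x hx => (hf x hx).1⟩

theorem arbSum_pos (hP : ∀ i j, 0 ≤ P i j) (hirr : MatIrreducible P) (r : S) :
    0 < arbSum P r := by
  obtain ⟨f, hf, hpos⟩ := exists_isArb_forall_pos hP hirr r
  exact sum_pos' (fun g _ => prod_nonneg fun x _ => hP x (g x))
    ⟨f, by simpa using hf, prod_pos fun x hx => hpos x (ne_of_mem_erase hx)⟩

theorem vecMul_pow_eq_self {v : S → ℝ} (hv : v ᵥ* P = v) (k : ℕ) : v ᵥ* P ^ k = v := by
  induction k with
  | zero => exact vecMul_one v
  | succ k ih => rw [pow_succ, ← vecMul_vecMul, ih, hv]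

theorem eq_zero_of_vecMul_eq_self (hP : ∀ i j, 0 ≤ P i j) (hirr : MatIrreducible P)
    {δ : S → ℝ} (hδ : ∀ x, 0 ≤ δ x) (hδP : δ ᵥ* P = δ) {i₀ : S} (hi₀ : δ i₀ = 0) : δ = 0 := by
  ext x
  obtain ⟨k, -, hk⟩ := hirr x i₀
  have hsum : ∑ y, δ y * (P ^ k) y i₀ = 0 := by
    rw [← hi₀, ← congrFun (vecMul_pow_eq_self hδP k) i₀]
    rfl
  have hx := (sum_eq_zero_iff_of_nonneg fun y _ =>
    mul_nonneg (hδ y) (pow_apply_nonneg hP k y i₀)).mp hsum x (mem_univ x)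
  exact (mul_eq_zero.mp hx).resolve_right hk.ne'

theorem exists_eq_smul_of_vecMul_eq_self (hP : ∀ i j, 0 ≤ P i j) (hirr : MatIrreducible P)
    {ν π : S → ℝ} (hν : ∀ i, 0 < ν i) (hνP : ν ᵥ* P = ν) (hπP : π ᵥ* P = π) :
    ∃ c : ℝ, π = c • ν := by
  cases isEmpty_or_nonempty S
  · exact ⟨0, Subsingleton.elim _ _⟩
  obtain ⟨i₀, -, hmin⟩ := exists_min_image univ (fun i => π i / ν i) univ_nonempty
  refine ⟨π i₀ / ν i₀, sub_eq_zero.mp (eq_zero_of_vecMul_eq_self hP hirr (i₀ := i₀) ?_ ?_ ?_)⟩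
  · intro x
    have := (le_div_iff₀ (hν x)).mp (hmin x (mem_univ x))
    simp only [Pi.sub_apply, Pi.smul_apply, smul_eq_mul, sub_nonneg]
    linarith
  · rw [sub_vecMul, smul_vecMul, hπP, hνP]
  · simp [div_mul_cancel₀ _ (hν i₀).ne']

end Irreducible

theorem markov_chain_tree_theorem {S : Type*} [Fintype S] [DecidableEq S] [Nonempty S]
    (P : Matrix S S ℝ) (hP : RowStochastic P) (hirr : MatIrreducible P)
    (π : S → ℝ) (hπ : StationaryDist P π) :
    0 < ∑ j, arbSum P j ∧ ∀ i, π i = arbSum P i / ∑ j, arbSum P j := by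
  have hpos : ∀ i, 0 < arbSum P i := arbSum_pos hP.1 hirr
  have hZ : 0 < ∑ j, arbSum P j := sum_pos (fun i _ => hpos i) univ_nonempty
  obtain ⟨c, hc⟩ := exists_eq_smul_of_vecMul_eq_self hP.1 hirr hpos (arbSum_vecMul hP.2)
    (funext hπ.2.2)
  have hcZ : c * ∑ j, arbSum P j = 1 := by
    rw [mul_sum, ← hπ.2.1, hc]
    rfl
  refine ⟨hZ, fun i => ?_⟩
  rw [hc, eq_div_iff hZ.ne', Pi.smul_apply, smul_eq_mul, mul_right_comm, hcZ, one_mul]
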